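/- arXiv:2002.07378 — 2 statements merged into one kernel-verified Lean document; each statement's English description precedes it below -/
import Mathlib

section
/- Under the DAN (Polyak adaptive Newton) iteration, for every k ≤ k₀ one has ‖x_k − x⋆‖ ≤ (μ/L)·(k₀ − k + 2γ/(1 − γ)), and for every k > k₀ one has ‖x_k − x⋆‖ ≤ 2μ·γ^(2^(k−k₀)) / (L·(1 − γ^(2^(k−k₀)))). -/
/-!
With `u k = L / (2 μ²) ‖∇f(x k)‖`, Taylor's formula for the gradient (whose derivative is
`L`-Lipschitz) together with `μ‖v‖ ≤ ‖∇²f(x) v‖` bounds the gradient after one damped Newton step: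
`‖∇f(x')‖ ≤ (1 - α) ‖∇f(x)‖ + L / (2 μ²) (α ‖∇f(x)‖)²`. For the Polyak step size this reads
`u (k+1) ≤ u k - 1/4` while `u k ≥ 1/2` and `u (k+1) ≤ (u k)²` once `u k ≤ 1/2`. Hence `u` drops
linearly for `k₀` steps down to `u k₀ ≤ γ ≤ 1/2` and then `u (k₀ + j) ≤ γ ^ 2 ^ j`. Strong
monotonicity of the gradient, `μ ‖x - x⋆‖ ≤ ‖∇f(x)‖`, turns these into the distance bounds.
-/

open scoped InnerProductSpace

section Calculus

variable {E F : Type*} [NormedAddCommGroup E] [NormedSpace ℝ E]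
  [NormedAddCommGroup F] [NormedSpace ℝ F]

lemma Differentiable.hasDerivAt_comp_add_smul {g : E → F} (hg : Differentiable ℝ g)
    (a d : E) (t : ℝ) :
    HasDerivAt (fun s : ℝ => g (a + s • d)) (fderiv ℝ g (a + t • d) d) t := by
  have hline : HasDerivAt (fun s : ℝ => a + s • d) d t := by
    simpa using ((hasDerivAt_id t).smul_const d).const_add a
  exact (hg _).hasFDerivAt.comp_hasDerivAt t hline

lemma norm_sub_sub_fderiv_le_of_lipschitz_fderiv {g : E → F} (hg : Differentiable ℝ g) {L : ℝ}
    (hlip : ∀ x y, ‖fderiv ℝ g x - fderiv ℝ g y‖ ≤ L * ‖x - y‖) (a b : E) :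
    ‖g b - g a - fderiv ℝ g a (b - a)‖ ≤ L / 2 * ‖b - a‖ ^ 2 := by
  set d := b - a
  set H := fderiv ℝ g
  set φ : ℝ → F := fun t => g (a + t • d) - t • H a d - g a with hφ
  have hφ' : ∀ t, HasDerivAt φ (H (a + t • d) d - H a d) t := fun t => by
    convert ((hg.hasDerivAt_comp_add_smul a d t).sub
      ((hasDerivAt_id t).smul_const (H a d))).sub_const (g a) using 1 <;>
    simp [hφ, H]
  have hB : ∀ t : ℝ, HasDerivAt (fun s => L / 2 * ‖d‖ ^ 2 * s ^ 2) (L * ‖d‖ ^ 2 * t) t :=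
    fun t => ((hasDerivAt_pow 2 t).const_mul (L / 2 * ‖d‖ ^ 2)).congr_deriv (by push_cast; ring)
  have hbound : ∀ t ∈ Set.Ico (0 : ℝ) 1, ‖H (a + t • d) d - H a d‖ ≤ L * ‖d‖ ^ 2 * t := by
    intro t ht
    calc ‖H (a + t • d) d - H a d‖ = ‖(H (a + t • d) - H a) d‖ := rfl
      _ ≤ ‖H (a + t • d) - H a‖ * ‖d‖ := ContinuousLinearMap.le_opNorm _ _
      _ ≤ L * ‖a + t • d - a‖ * ‖d‖ := by gcongr; exact hlip _ _
      _ = L * ‖d‖ ^ 2 * t := by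
        rw [add_sub_cancel_left, norm_smul, Real.norm_of_nonneg ht.1]; ring
  have key := image_norm_le_of_norm_deriv_right_le_deriv_boundary
    (fun t _ => (hφ' t).continuousAt.continuousWithinAt) (fun t _ => (hφ' t).hasDerivWithinAt)
    (by simp [hφ]) hB hbound (Set.right_mem_Icc.2 zero_le_one)
  have hφ1 : φ 1 = g b - g a - H a d := by simp [hφ, d]; abel
  simpa [hφ1] using key

lemma norm_damped_newton_step_le {g : E → F} (hg : Differentiable ℝ g) {L μ α : ℝ}
    (hL : 0 ≤ L) (hμ : 0 < μ) (hlip : ∀ x y, ‖fderiv ℝ g x - fderiv ℝ g y‖ ≤ L * ‖x - y‖)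
    (hα₀ : 0 ≤ α) (hα₁ : α ≤ 1) {x y : E} (hH : μ * ‖y - x‖ ≤ ‖fderiv ℝ g x (y - x)‖)
    (hstep : fderiv ℝ g x (y - x) = -α • g x) :
    ‖g y‖ ≤ (1 - α) * ‖g x‖ + L / (2 * μ ^ 2) * (α * ‖g x‖) ^ 2 := by
  have htaylor := norm_sub_sub_fderiv_le_of_lipschitz_fderiv hg hlip x y
  have hmove : μ * ‖y - x‖ ≤ α * ‖g x‖ := by
    rwa [hstep, norm_smul, norm_neg, Real.norm_of_nonneg hα₀] at hH
  have hsplit : g y = (g y - g x - fderiv ℝ g x (y - x)) + (1 - α) • g x := by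
    rw [hstep]; module
  calc ‖g y‖ ≤ L / 2 * ‖y - x‖ ^ 2 + (1 - α) * ‖g x‖ := by
        rw [hsplit]
        refine (norm_add_le _ _).trans (add_le_add htaylor ?_)
        rw [norm_smul, Real.norm_of_nonneg (by linarith)]
    _ = (1 - α) * ‖g x‖ + L / (2 * μ ^ 2) * (μ * ‖y - x‖) ^ 2 := by field_simp; ring
    _ ≤ (1 - α) * ‖g x‖ + L / (2 * μ ^ 2) * (α * ‖g x‖) ^ 2 := by gcongr

end Calculus

section InnerProduct

variable {E : Type*} [NormedAddCommGroup E] [InnerProductSpace ℝ E]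

lemma mul_norm_le_norm_of_mul_sq_le_inner {μ : ℝ} {v w : E} (h : μ * ‖v‖ ^ 2 ≤ ⟪w, v⟫_ℝ) :
    μ * ‖v‖ ≤ ‖w‖ := by
  rcases (norm_nonneg v).eq_or_lt with hv | hv
  · simp [← hv]
  · have := h.trans (real_inner_le_norm w v)
    rw [sq, ← mul_assoc] at this
    exact le_of_mul_le_mul_right this hv

lemma mul_sq_le_inner_sub_of_fderiv {g : E → E} (hg : Differentiable ℝ g) {μ : ℝ}
    (hstrong : ∀ x v, μ * ‖v‖ ^ 2 ≤ ⟪fderiv ℝ g x v, v⟫_ℝ) (a b : E) :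
    μ * ‖b - a‖ ^ 2 ≤ ⟪g b - g a, b - a⟫_ℝ := by
  set d := b - a
  have hψ : ∀ t, HasDerivAt (fun s : ℝ => ⟪g (a + s • d), d⟫_ℝ)
      ⟪fderiv ℝ g (a + t • d) d, d⟫_ℝ t := fun t => by
    simpa using (hg.hasDerivAt_comp_add_smul a d t).inner ℝ (hasDerivAt_const t d)
  obtain ⟨t, -, ht⟩ := exists_hasDerivAt_eq_slope _ _ zero_lt_one
    (fun t _ => (hψ t).continuousAt.continuousWithinAt) (fun t _ => hψ t)
  simp only [zero_smul, add_zero, one_smul, sub_zero, div_one, add_sub_cancel, d] at ht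
  rw [inner_sub_left, ← ht]
  exact hstrong _ _

lemma mul_norm_sub_le_norm_sub_of_fderiv {g : E → E} (hg : Differentiable ℝ g) {μ : ℝ}
    (hstrong : ∀ x v, μ * ‖v‖ ^ 2 ≤ ⟪fderiv ℝ g x v, v⟫_ℝ) (a b : E) :
    μ * ‖b - a‖ ≤ ‖g b - g a‖ :=
  mul_norm_le_norm_of_mul_sq_le_inner (mul_sq_le_inner_sub_of_fderiv hg hstrong a b)

lemma ContDiff.differentiable_gradient [CompleteSpace E] {f : E → ℝ} (hf : ContDiff ℝ 2 f) :
    Differentiable ℝ (gradient f) :=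
  ((InnerProductSpace.toDual ℝ E).symm.toContinuousLinearEquiv.contDiff.comp
    (hf.fderiv_right (m := 1) (by norm_num))).differentiable one_ne_zero

end InnerProduct

section PolyakStep

variable {μ L α G G' : ℝ}

lemma polyak_step_damped_phase (hμ : 0 < μ) (hL : 0 < L) (hG : 1 / 2 ≤ L / (2 * μ ^ 2) * G)
    (hα : α = min 1 (μ ^ 2 / (L * G)))
    (hG' : G' ≤ (1 - α) * G + L / (2 * μ ^ 2) * (α * G) ^ 2) :
    L / (2 * μ ^ 2) * G' ≤ L / (2 * μ ^ 2) * G - 1 / 4 := by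
  have hLG : μ ^ 2 ≤ L * G := by
    rw [div_mul_eq_mul_div, le_div_iff₀ (by positivity)] at hG; linarith
  have hLGpos : 0 < L * G := lt_of_lt_of_le (by positivity) hLG
  have hα' : α = μ ^ 2 / (L * G) := by
    rw [hα, min_eq_right ((div_le_one hLGpos).2 hLG)]
  have hGpos : 0 < G := pos_of_mul_pos_right hLGpos hL.le
  have hdecrease : G' ≤ G - μ ^ 2 / (2 * L) := by
    convert hG' using 1; rw [hα']; field_simp; ring
  calc L / (2 * μ ^ 2) * G' ≤ L / (2 * μ ^ 2) * (G - μ ^ 2 / (2 * L)) := by gcongr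
    _ = L / (2 * μ ^ 2) * G - 1 / 4 := by field_simp; ring

lemma polyak_step_pure_phase (hμ : 0 < μ) (hL : 0 < L) (hG₀ : 0 ≤ G)
    (hG : L / (2 * μ ^ 2) * G ≤ 1 / 2) (hα : α = min 1 (μ ^ 2 / (L * G)))
    (hG' : G' ≤ (1 - α) * G + L / (2 * μ ^ 2) * (α * G) ^ 2) :
    L / (2 * μ ^ 2) * G' ≤ (L / (2 * μ ^ 2) * G) ^ 2 := by
  have hquad : G' ≤ L / (2 * μ ^ 2) * G ^ 2 := by
    rcases hG₀.eq_or_lt with rfl | hGpos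
    -- at `G = 0` the step size is `min 1 (μ² / 0) = 0`, and the step bound already gives `G' ≤ 0`
    · simpa using hG'
    have hLG : L * G ≤ μ ^ 2 := by
      rw [div_mul_eq_mul_div, div_le_iff₀ (by positivity)] at hG; linarith
    rw [hα, min_eq_left ((one_le_div (by positivity)).2 hLG)] at hG'
    simpa using hG'
  calc L / (2 * μ ^ 2) * G' ≤ L / (2 * μ ^ 2) * (L / (2 * μ ^ 2) * G ^ 2) := by gcongr
    _ = (L / (2 * μ ^ 2) * G) ^ 2 := by ring

end PolyakStep

section DampedNewton

variable {E : Type*} [NormedAddCommGroup E] [InnerProductSpace ℝ E] {g : E → E} {μ L : ℝ}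

lemma polyak_newton_step_phases (hg : Differentiable ℝ g) (hμ : 0 < μ) (hL : 0 < L)
    (hstrong : ∀ x v, μ * ‖v‖ ^ 2 ≤ ⟪fderiv ℝ g x v, v⟫_ℝ)
    (hlip : ∀ x y, ‖fderiv ℝ g x - fderiv ℝ g y‖ ≤ L * ‖x - y‖) {x y : E} {α : ℝ}
    (hα : α = min 1 (μ ^ 2 / (L * ‖g x‖))) (hstep : fderiv ℝ g x (y - x) = -α • g x) :
    (1 / 2 ≤ L / (2 * μ ^ 2) * ‖g x‖ →
      L / (2 * μ ^ 2) * ‖g y‖ ≤ L / (2 * μ ^ 2) * ‖g x‖ - 1 / 4) ∧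
    (L / (2 * μ ^ 2) * ‖g x‖ ≤ 1 / 2 →
      L / (2 * μ ^ 2) * ‖g y‖ ≤ (L / (2 * μ ^ 2) * ‖g x‖) ^ 2) := by
  have hα₀ : 0 ≤ α := hα ▸ le_min zero_le_one (by positivity)
  have hα₁ : α ≤ 1 := hα ▸ min_le_left _ _
  have hdescent := norm_damped_newton_step_le hg hL.le hμ hlip hα₀ hα₁
    (mul_norm_le_norm_of_mul_sq_le_inner (hstrong _ _)) hstep
  exact ⟨fun h => polyak_step_damped_phase hμ hL h hα hdescent,
    fun h => polyak_step_pure_phase hμ hL (norm_nonneg _) h hα hdescent⟩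

end DampedNewton

lemma offset_bounds_of_eq_max_ceil {s : ℝ} (hs : 0 ≤ s) {k₀ : ℕ}
    (hk₀ : (k₀ : ℤ) = max 0 (⌈4 * s⌉ - 2)) :
    0 ≤ s - k₀ / 4 ∧ s - k₀ / 4 ≤ 1 / 2 ∧ (1 ≤ k₀ → 1 / 4 ≤ s - k₀ / 4) := by
  rcases le_total (⌈4 * s⌉ - 2) 0 with hle | hle
  · rw [max_eq_left hle, Nat.cast_eq_zero] at hk₀
    have : 4 * s ≤ 2 := by
      have := Int.ceil_le.1 (show ⌈4 * s⌉ ≤ 2 by omega); exact_mod_cast this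
    subst hk₀
    refine ⟨by simpa using hs, by simp; linarith, by simp⟩
  · rw [max_eq_right hle] at hk₀
    have hk : (k₀ : ℝ) = ⌈4 * s⌉ - 2 := by exact_mod_cast hk₀
    have hlo := Int.le_ceil (4 * s)
    have hhi := Int.ceil_lt_add_one (4 * s)
    refine ⟨by linarith, by linarith, fun _ => by linarith⟩

section TwoPhases

variable {u : ℕ → ℝ} {k₀ : ℕ} {γ : ℝ}

lemma le_add_div_four_of_damped_phase (hu : ∀ k, 0 ≤ u k)
    (hdamp : ∀ k, 1 / 2 ≤ u k → u (k + 1) ≤ u k - 1 / 4)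
    (hpure : ∀ k, u k ≤ 1 / 2 → u (k + 1) ≤ u k ^ 2)
    (h₀ : u 0 ≤ γ + k₀ / 4) (hγ : 1 ≤ k₀ → 1 / 4 ≤ γ) :
    ∀ k ≤ k₀, u k ≤ γ + (k₀ - k) / 4 := by
  intro k
  induction k with
  | zero => simpa using h₀
  | succ n ih =>
    intro hn
    have hn' : (n : ℝ) + 1 ≤ k₀ := by exact_mod_cast hn
    push_cast
    rcases le_or_gt (1 / 2) (u n) with hlarge | hsmall
    · linarith [hdamp n hlarge, ih (by omega)]
    · have hsq : u n ^ 2 ≤ 1 / 4 := by nlinarith [hu n]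
      linarith [hpure n hsmall.le, hγ (by omega)]

lemma le_pow_two_pow_of_pure_phase (hu : ∀ k, 0 ≤ u k)
    (hpure : ∀ k, u k ≤ 1 / 2 → u (k + 1) ≤ u k ^ 2)
    (hγ : γ ≤ 1 / 2) (hk₀ : u k₀ ≤ γ) : ∀ j, u (k₀ + j) ≤ γ ^ 2 ^ j := by
  have hγ₀ : 0 ≤ γ := (hu k₀).trans hk₀
  intro j
  induction j with
  | zero => simpa using hk₀
  | succ n ih =>
    have hhalf : γ ^ 2 ^ n ≤ 1 / 2 :=
      (pow_le_of_le_one hγ₀ (by linarith) (by positivity)).trans hγ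
    calc u (k₀ + (n + 1)) ≤ u (k₀ + n) ^ 2 := hpure (k₀ + n) (ih.trans hhalf)
      _ ≤ (γ ^ 2 ^ n) ^ 2 := by gcongr; exact hu _
      _ = γ ^ 2 ^ (n + 1) := by rw [← pow_mul, pow_succ]

lemma two_phase_bounds (hu : ∀ k, 0 ≤ u k)
    (hdamp : ∀ k, 1 / 2 ≤ u k → u (k + 1) ≤ u k - 1 / 4)
    (hpure : ∀ k, u k ≤ 1 / 2 → u (k + 1) ≤ u k ^ 2)
    (hk₀ : (k₀ : ℤ) = max 0 (⌈4 * u 0⌉ - 2)) (hγ : γ = u 0 - k₀ / 4) :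
    (∀ k ≤ k₀, 2 * u k ≤ k₀ - k + 2 * γ / (1 - γ)) ∧
    (∀ k > k₀, 2 * u k ≤ 2 * γ ^ 2 ^ (k - k₀) / (1 - γ ^ 2 ^ (k - k₀))) := by
  obtain ⟨hγ₀, hγ₁, hγ₂⟩ := hγ ▸ offset_bounds_of_eq_max_ceil (hu 0) hk₀
  have hphase₁ := le_add_div_four_of_damped_phase hu hdamp hpure (by linarith) hγ₂
  refine ⟨fun k hk => ?_, fun k hk => ?_⟩
  · have hk' : (k : ℝ) ≤ k₀ := by exact_mod_cast hk
    have hfrac : 2 * γ ≤ 2 * γ / (1 - γ) := le_div_self (by positivity) (by linarith) (by linarith)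
    linarith [hphase₁ k hk]
  · obtain ⟨j, rfl⟩ : ∃ j, k = k₀ + j := ⟨k - k₀, by omega⟩
    rw [Nat.add_sub_cancel_left]
    have hhalf : γ ^ 2 ^ j ≤ 1 / 2 :=
      (pow_le_of_le_one hγ₀ (by linarith) (by positivity)).trans hγ₁
    calc 2 * u (k₀ + j) ≤ 2 * γ ^ 2 ^ j := by
          gcongr; exact le_pow_two_pow_of_pure_phase hu hpure hγ₁ (by simpa using hphase₁ k₀ le_rfl) j
      _ ≤ 2 * γ ^ 2 ^ j / (1 - γ ^ 2 ^ j) :=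
          le_div_self (by positivity) (by linarith) (by linarith [pow_nonneg hγ₀ (2 ^ j)])

end TwoPhases

theorem dan_distance_bounds_general (p : ℕ)
    (f : EuclideanSpace ℝ (Fin p) → ℝ) (hf : ContDiff ℝ 2 f)
    (μ L : ℝ) (hμ : 0 < μ) (hL : 0 < L)
    (hstrong : ∀ x v : EuclideanSpace ℝ (Fin p),
      μ * ‖v‖ ^ 2 ≤ inner ℝ (fderiv ℝ (gradient f) x v) v)
    (hlip : ∀ x y : EuclideanSpace ℝ (Fin p),
      ‖fderiv ℝ (gradient f) x - fderiv ℝ (gradient f) y‖ ≤ L * ‖x - y‖)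
    (xs : EuclideanSpace ℝ (Fin p)) (hxs : gradient f xs = 0)
    (x : ℕ → EuclideanSpace ℝ (Fin p)) (α : ℕ → ℝ)
    (hα : ∀ k, α k = min 1 (μ ^ 2 / (L * ‖gradient f (x k)‖)))
    (hupd : ∀ k, fderiv ℝ (gradient f) (x k) (x (k + 1) - x k)
      = -(α k) • gradient f (x k))
    (k₀ : ℕ) (hk₀ : (k₀ : ℤ) = max 0 (⌈2 * L / μ ^ 2 * ‖gradient f (x 0)‖⌉ - 2))
    (γ : ℝ) (hγ : γ = L / (2 * μ ^ 2) * ‖gradient f (x 0)‖ - (k₀ : ℝ) / 4) :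
    (∀ k ≤ k₀, ‖x k - xs‖ ≤ μ / L * ((k₀ : ℝ) - (k : ℝ) + 2 * γ / (1 - γ))) ∧
    (∀ k > k₀, ‖x k - xs‖ ≤
      2 * μ * γ ^ 2 ^ (k - k₀) / (L * (1 - γ ^ 2 ^ (k - k₀)))) := by
  have hg := hf.differentiable_gradient
  set u : ℕ → ℝ := fun k => L / (2 * μ ^ 2) * ‖gradient f (x k)‖ with hu_def
  have hu (k : ℕ) : 0 ≤ u k := by positivity
  have hphases (k : ℕ) := polyak_newton_step_phases hg hμ hL hstrong hlip (hα k) (hupd k)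
  have hdist (k : ℕ) : ‖x k - xs‖ ≤ μ / L * (2 * u k) := by
    have := mul_norm_sub_le_norm_sub_of_fderiv hg hstrong xs (x k)
    rw [hxs, sub_zero] at this
    calc ‖x k - xs‖ ≤ ‖gradient f (x k)‖ / μ := by rw [le_div_iff₀ hμ]; linarith
      _ = μ / L * (2 * u k) := by rw [hu_def]; field_simp
  rw [show 2 * L / μ ^ 2 * ‖gradient f (x 0)‖ = 4 * u 0 by ring] at hk₀
  obtain ⟨hdamped, hquadratic⟩ := two_phase_bounds hu (fun k => (hphases k).1)
    (fun k => (hphases k).2) hk₀ hγ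
  refine ⟨fun k hk => (hdist k).trans ?_, fun k hk => (hdist k).trans ?_⟩
  · gcongr; exact hdamped k hk
  · calc μ / L * (2 * u k) ≤ μ / L * (2 * γ ^ 2 ^ (k - k₀) / (1 - γ ^ 2 ^ (k - k₀))) := by
          gcongr; exact hquadratic k hk
      _ = 2 * μ * γ ^ 2 ^ (k - k₀) / (L * (1 - γ ^ 2 ^ (k - k₀))) := by
          rw [div_mul_div_comm]; ring

theorem dan_distance_bounds (p : ℕ) (hp : 1 ≤ p)
    (f : EuclideanSpace ℝ (Fin p) → ℝ) (hf : ContDiff ℝ 2 f)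
    (μ L : ℝ) (hμ : 0 < μ) (hL : 0 < L)
    (hstrong : ∀ x v : EuclideanSpace ℝ (Fin p),
      μ * ‖v‖ ^ 2 ≤ inner ℝ (fderiv ℝ (gradient f) x v) v)
    (hlip : ∀ x y : EuclideanSpace ℝ (Fin p),
      ‖fderiv ℝ (gradient f) x - fderiv ℝ (gradient f) y‖ ≤ L * ‖x - y‖)
    (xs : EuclideanSpace ℝ (Fin p)) (hxs : gradient f xs = 0)
    (x : ℕ → EuclideanSpace ℝ (Fin p)) (α : ℕ → ℝ)
    (hα : ∀ k, α k = min 1 (μ ^ 2 / (L * ‖gradient f (x k)‖)))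
    (hupd : ∀ k, fderiv ℝ (gradient f) (x k) (x (k + 1) - x k)
      = -(α k) • gradient f (x k))
    (k₀ : ℕ) (hk₀ : (k₀ : ℤ) = max 0 (⌈2 * L / μ ^ 2 * ‖gradient f (x 0)‖⌉ - 2))
    (γ : ℝ) (hγ : γ = L / (2 * μ ^ 2) * ‖gradient f (x 0)‖ - (k₀ : ℝ) / 4) :
    (∀ k ≤ k₀, ‖x k - xs‖ ≤ μ / L * ((k₀ : ℝ) - (k : ℝ) + 2 * γ / (1 - γ))) ∧
    (∀ k > k₀, ‖x k - xs‖ ≤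
      2 * μ * γ ^ 2 ^ (k - k₀) / (L * (1 - γ ^ 2 ^ (k - k₀)))) :=
  dan_distance_bounds_general p f hf μ L hμ hL hstrong hlip xs hxs x α hα hupd k₀ hk₀ γ hγ
end

section
/- Let x ∈ E and let H : E →L[ℝ] E be a self-adjoint continuous linear operator with ‖H − ∇²f(x)‖ ≤ r̲. Suppose ‖∇f(x)‖ ≤ φ and let z ∈ E satisfy H z = −∇f(x) (a pure Newton step with unit stepsize). Then ‖∇f(x + z)‖ ≤ (r̲/(μ − r̲))·‖∇f(x)‖ + (L/(2(μ − r̲)²))·‖∇f(x)‖², and consequently ‖∇f(x + z)‖ ≤ (μ/(M + μ))·‖∇f(x)‖ ≤ (1/2)·‖∇f(x)‖. -/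
open Set

/-!
Write `g = ∇f`, `A = ∇²f(x)` and `q = ‖∇f(x)‖`. Since `A` is `μ`-coercive and `‖H - A‖ ≤ r̲`,
`H` is `(μ - r̲)`-coercive, so `‖z‖ ≤ q / (μ - r̲)`. Splitting
`g(x + z) = (g(x + z) - g(x) - A z) + (A - H) z`, the first term is at most `L‖z‖²/2` because
`A` is `L`-Lipschitz, and the second at most `r̲‖z‖`; this gives the first bound. The threshold
`φ` is chosen so that `r̲/(μ - r̲) + L φ/(2(μ - r̲)²) = μ/(M + μ)`, which turns `q ≤ φ` into the
second bound, and `μ ≤ M` gives the third.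
-/

theorem ContDiff.gradient {F : Type*} [NormedAddCommGroup F] [InnerProductSpace ℝ F]
    [CompleteSpace F] {f : F → ℝ} {m n : WithTop ℕ∞} (hf : ContDiff ℝ n f) (hmn : m + 1 ≤ n) :
    ContDiff ℝ m (gradient f) :=
  (InnerProductSpace.toDual ℝ F).symm.contDiff.comp (hf.fderiv_right hmn)

section Normed

variable {E F : Type*} [NormedAddCommGroup E] [NormedSpace ℝ E] [NormedAddCommGroup F]
  [NormedSpace ℝ F] {g : E → F} {g' : E → E →L[ℝ] F}

theorem norm_sub_sub_fderiv_le_of_lipschitz {x z : E} {L : ℝ} (hg : ∀ y, HasFDerivAt g (g' y) y)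
    (hlip : ∀ y, ‖g' y - g' x‖ ≤ L * ‖y - x‖) :
    ‖g (x + z) - g x - g' x z‖ ≤ L / 2 * ‖z‖ ^ 2 := by
  set ψ : ℝ → F := fun t => g (x + t • z) - g x - t • g' x z
  have hψ : ∀ t, HasDerivAt ψ (g' (x + t • z) z - g' x z) t := fun t => by
    have hline : HasDerivAt (fun s : ℝ => x + s • z) z t := by
      simpa using ((hasDerivAt_id t).smul_const z).const_add x
    have hlin : HasDerivAt (fun s : ℝ => s • g' x z) (g' x z) t := by
      simpa using (hasDerivAt_id t).smul_const (g' x z)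
    exact (((hg _).comp_hasDerivAt t hline).sub_const (g x)).sub hlin
  have hbound : ∀ t ∈ Ico (0 : ℝ) 1, ‖g' (x + t • z) z - g' x z‖ ≤ L * ‖z‖ ^ 2 * t := by
    rintro t ⟨ht, -⟩
    calc ‖g' (x + t • z) z - g' x z‖ = ‖(g' (x + t • z) - g' x) z‖ := rfl
      _ ≤ ‖g' (x + t • z) - g' x‖ * ‖z‖ := ContinuousLinearMap.le_opNorm _ _
      _ ≤ L * (t * ‖z‖) * ‖z‖ := by
        gcongr
        simpa [norm_smul, abs_of_nonneg ht] using hlip (x + t • z)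
      _ = L * ‖z‖ ^ 2 * t := by ring
  have hB : ∀ t : ℝ, HasDerivAt (fun s => L / 2 * ‖z‖ ^ 2 * s ^ 2) (L * ‖z‖ ^ 2 * t) t := fun t =>
    ((hasDerivAt_pow 2 t).const_mul (L / 2 * ‖z‖ ^ 2)).congr_deriv (by ring)
  have := image_norm_le_of_norm_deriv_right_le_deriv_boundary
    (fun t _ => (hψ t).continuousAt.continuousWithinAt) (fun t _ => (hψ t).hasDerivWithinAt)
    (by simp [ψ]) hB hbound (right_mem_Icc.2 zero_le_one)
  simpa [ψ] using this

theorem norm_apply_add_le_of_inexact_newton {H : E →L[ℝ] F} {x z : E} {L r : ℝ}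
    (hg : ∀ y, HasFDerivAt g (g' y) y)
    (hlip : ∀ y, ‖g' y - g' x‖ ≤ L * ‖y - x‖) (hH : ‖H - g' x‖ ≤ r) (hz : H z = -g x) :
    ‖g (x + z)‖ ≤ r * ‖z‖ + L / 2 * ‖z‖ ^ 2 := by
  have hsplit : g (x + z) = (g (x + z) - g x - g' x z) + (g' x - H) z := by
    simp only [sub_apply, hz]
    abel
  have hHz : ‖(g' x - H) z‖ ≤ r * ‖z‖ :=
    ((g' x - H).le_opNorm z).trans (by rw [norm_sub_rev]; gcongr)
  rw [hsplit]
  linarith [norm_add_le (g (x + z) - g x - g' x z) ((g' x - H) z),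
    norm_sub_sub_fderiv_le_of_lipschitz (z := z) hg hlip]

end Normed

section InnerProduct

variable {E : Type*} [NormedAddCommGroup E] [InnerProductSpace ℝ E]

theorem ContinuousLinearMap.sub_mul_sq_le_inner_of_norm_sub_le {A H : E →L[ℝ] E} {μ r : ℝ}
    (hA : ∀ v, μ * ‖v‖ ^ 2 ≤ inner ℝ (A v) v) (hH : ‖H - A‖ ≤ r) (v : E) :
    (μ - r) * ‖v‖ ^ 2 ≤ inner ℝ (H v) v := by
  have hdiff : |inner ℝ ((H - A) v) v| ≤ r * ‖v‖ ^ 2 :=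
    calc |inner ℝ ((H - A) v) v| ≤ ‖(H - A) v‖ * ‖v‖ := abs_real_inner_le_norm _ _
      _ ≤ ‖H - A‖ * ‖v‖ * ‖v‖ := by gcongr; exact (H - A).le_opNorm v
      _ ≤ r * ‖v‖ ^ 2 := by rw [mul_assoc, ← sq]; gcongr
  have hsplit : inner ℝ (H v) v = inner ℝ (A v) v + inner ℝ ((H - A) v) v := by
    rw [← inner_add_left, sub_apply, add_sub_cancel]
  linarith [hA v, neg_abs_le (inner ℝ ((H - A) v) v)]

theorem ContinuousLinearMap.mul_norm_le_norm_apply_of_mul_sq_le_inner {H : E →L[ℝ] E} {c : ℝ}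
    (hH : ∀ v, c * ‖v‖ ^ 2 ≤ inner ℝ (H v) v) (v : E) : c * ‖v‖ ≤ ‖H v‖ := by
  rcases (norm_nonneg v).eq_or_lt with hv | hv
  · rw [← hv, mul_zero]
    exact norm_nonneg _
  · refine le_of_mul_le_mul_right ?_ hv
    calc c * ‖v‖ * ‖v‖ = c * ‖v‖ ^ 2 := by ring
      _ ≤ inner ℝ (H v) v := hH v
      _ ≤ ‖H v‖ * ‖v‖ := real_inner_le_norm _ _

theorem norm_inexact_newton_step_le {g : E → E} {g' : E → E →L[ℝ] E} {H : E →L[ℝ] E} {x z : E}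
    {μ L r : ℝ} (hg : ∀ y, HasFDerivAt g (g' y) y) (hlip : ∀ y, ‖g' y - g' x‖ ≤ L * ‖y - x‖)
    (hL : 0 ≤ L) (hcoer : ∀ v, μ * ‖v‖ ^ 2 ≤ inner ℝ (g' x v) v) (hr : 0 ≤ r) (hrμ : r < μ)
    (hH : ‖H - g' x‖ ≤ r) (hz : H z = -g x) :
    ‖g (x + z)‖ ≤ r / (μ - r) * ‖g x‖ + L / (2 * (μ - r) ^ 2) * ‖g x‖ ^ 2 := by
  have hμr : 0 < μ - r := sub_pos.2 hrμ
  have hz_le : ‖z‖ ≤ ‖g x‖ / (μ - r) := by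
    rw [le_div_iff₀ hμr, mul_comm, ← norm_neg (g x), ← hz]
    exact ContinuousLinearMap.mul_norm_le_norm_apply_of_mul_sq_le_inner
      (ContinuousLinearMap.sub_mul_sq_le_inner_of_norm_sub_le hcoer hH) z
  calc ‖g (x + z)‖ ≤ r * ‖z‖ + L / 2 * ‖z‖ ^ 2 :=
        norm_apply_add_le_of_inexact_newton hg hlip hH hz
    _ ≤ r * (‖g x‖ / (μ - r)) + L / 2 * (‖g x‖ / (μ - r)) ^ 2 := by gcongr
    _ = r / (μ - r) * ‖g x‖ + L / (2 * (μ - r) ^ 2) * ‖g x‖ ^ 2 := by field_simp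

end InnerProduct

theorem sqrt_sq_add_three_mul_sq_sub_div_three_mem_Ico {a μ : ℝ} (hμ : 0 < μ) (ha : -μ < a) :
    (√(a ^ 2 + 3 * μ ^ 2) - a) / 3 ∈ Ico 0 μ := by
  have hlower : a ≤ √(a ^ 2 + 3 * μ ^ 2) :=
    Real.le_sqrt_of_sq_le (by nlinarith)
  have hupper : √(a ^ 2 + 3 * μ ^ 2) < a + 3 * μ :=
    (Real.sqrt_lt' (by linarith)).2 (by nlinarith)
  constructor <;> linarith

theorem danla_pure_step_contraction_general (p : ℕ)
    (f : EuclideanSpace ℝ (Fin p) → ℝ) (hf : ContDiff ℝ 2 f)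
    (μ L M : ℝ) (hμ : 0 < μ) (hL : 0 < L) (hμM : μ ≤ M)
    (hstrong : ∀ x v : EuclideanSpace ℝ (Fin p),
      μ * ‖v‖ ^ 2 ≤ inner ℝ (fderiv ℝ (gradient f) x v) v)
    (hlip : ∀ x y : EuclideanSpace ℝ (Fin p),
      ‖fderiv ℝ (gradient f) x - fderiv ℝ (gradient f) y‖ ≤ L * ‖x - y‖)
    (c : ℝ) (hc : 0 < c)
    (Mc r φ : ℝ) (hMc : Mc = M + c)
    (hr : r = (Real.sqrt (Mc ^ 2 + 3 * μ ^ 2) - Mc) / 3)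
    (hφ : φ = 2 * μ * (μ - r) ^ 2 / (L * (M + μ)) - 2 * r * (μ - r) / L)
    (x z : EuclideanSpace ℝ (Fin p))
    (H : EuclideanSpace ℝ (Fin p) →L[ℝ] EuclideanSpace ℝ (Fin p))
    (hHerr : ‖H - fderiv ℝ (gradient f) x‖ ≤ r)
    (hg : ‖gradient f x‖ ≤ φ)
    (hz : H z = -gradient f x) :
    ‖gradient f (x + z)‖ ≤
      r / (μ - r) * ‖gradient f x‖ + L / (2 * (μ - r) ^ 2) * ‖gradient f x‖ ^ 2 ∧
    ‖gradient f (x + z)‖ ≤ μ / (M + μ) * ‖gradient f x‖ ∧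
    ‖gradient f (x + z)‖ ≤ 1 / 2 * ‖gradient f x‖ := by
  obtain ⟨hr0, hrμ⟩ : r ∈ Ico 0 μ :=
    hr ▸ sqrt_sq_add_three_mul_sq_sub_div_three_mem_Ico hμ (by linarith)
  have hderiv : ∀ y, HasFDerivAt (gradient f) (fderiv ℝ (gradient f) y) y := fun y =>
    ((hf.gradient (m := 1) le_rfl).differentiable one_ne_zero y).hasFDerivAt
  have first :=
    norm_inexact_newton_step_le hderiv (fun y => hlip y x) hL.le (hstrong x) hr0 hrμ hHerr hz
  have hthreshold : r / (μ - r) + L / (2 * (μ - r) ^ 2) * φ = μ / (M + μ) := by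
    have : μ - r ≠ 0 := (sub_pos.2 hrμ).ne'
    rw [hφ]
    field_simp
    ring
  have second : ‖gradient f (x + z)‖ ≤ μ / (M + μ) * ‖gradient f x‖ := by
    have hcoef : 0 ≤ L / (2 * (μ - r) ^ 2) := by positivity
    rw [← hthreshold]
    have hsq := mul_le_mul_of_nonneg_right hg (norm_nonneg (gradient f x))
    nlinarith [mul_le_mul_of_nonneg_left hsq hcoef]
  have hhalf : μ / (M + μ) ≤ 1 / 2 := by
    rw [div_le_div_iff₀ (by linarith) two_pos]
    linarith
  exact ⟨first, second, second.trans (mul_le_mul_of_nonneg_right hhalf (norm_nonneg _))⟩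

theorem danla_pure_step_contraction (p : ℕ) (hp : 1 ≤ p)
    (f : EuclideanSpace ℝ (Fin p) → ℝ) (hf : ContDiff ℝ 2 f)
    (μ L M : ℝ) (hμ : 0 < μ) (hL : 0 < L) (hμM : μ ≤ M)
    (hstrong : ∀ x v : EuclideanSpace ℝ (Fin p),
      μ * ‖v‖ ^ 2 ≤ inner ℝ (fderiv ℝ (gradient f) x v) v)
    (hlip : ∀ x y : EuclideanSpace ℝ (Fin p),
      ‖fderiv ℝ (gradient f) x - fderiv ℝ (gradient f) y‖ ≤ L * ‖x - y‖)
    (hbound : ∀ x : EuclideanSpace ℝ (Fin p), ‖fderiv ℝ (gradient f) x‖ ≤ M)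
    (c : ℝ) (hc : 0 < c)
    (Mc r φ : ℝ) (hMc : Mc = M + c)
    (hr : r = (Real.sqrt (Mc ^ 2 + 3 * μ ^ 2) - Mc) / 3)
    (hφ : φ = 2 * μ * (μ - r) ^ 2 / (L * (M + μ)) - 2 * r * (μ - r) / L)
    (x z : EuclideanSpace ℝ (Fin p))
    (H : EuclideanSpace ℝ (Fin p) →L[ℝ] EuclideanSpace ℝ (Fin p))
    (hHsa : ∀ v w : EuclideanSpace ℝ (Fin p), (inner ℝ (H v) w : ℝ) = inner ℝ v (H w))
    (hHerr : ‖H - fderiv ℝ (gradient f) x‖ ≤ r)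
    (hg : ‖gradient f x‖ ≤ φ)
    (hz : H z = -gradient f x) :
    ‖gradient f (x + z)‖ ≤
      r / (μ - r) * ‖gradient f x‖ + L / (2 * (μ - r) ^ 2) * ‖gradient f x‖ ^ 2 ∧
    ‖gradient f (x + z)‖ ≤ μ / (M + μ) * ‖gradient f x‖ ∧
    ‖gradient f (x + z)‖ ≤ 1 / 2 * ‖gradient f x‖ :=
  danla_pure_step_contraction_general p f hf μ L M hμ hL hμM hstrong hlip c hc Mc r φ hMc hr hφ x z
    H hHerr hg hz
end
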